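/- For two depolarizing channels with p = q, the difference between the quantum-trajectory and classical-trajectory entanglement-assisted capacities equals G(p) = H(1 − 2p²/3) + (2p − 2p²)·log₂((2p−2p²)/3) + (2p²/3)·log₂(2p²/9) − (2p − 4p²/3)·log₂((6p−4p²)/9), and G(p) > 0 for all p ∈ (0,1]. -/

import Mathlib

noncomputable def H (x : ℝ) : ℝ := -(x * Real.logb 2 x) - (1 - x) * Real.logb 2 (1 - x)

noncomputable def CECdep (p : ℝ) : ℝ :=
  2 + (1 - 2*p + 4*p^2/3) * Real.logb 2 (1 - 2*p + 4*p^2/3)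
    + (2*p - 4*p^2/3) * Real.logb 2 ((6*p - 4*p^2)/9)

noncomputable def CEQdep (p : ℝ) : ℝ :=
  2 + H (1 - 2*p^2/3)
    + (1 - 2*p + 4*p^2/3) * Real.logb 2 (1 - 2*p + 4*p^2/3)
    + (2*p - 2*p^2) * Real.logb 2 ((2*p - 2*p^2)/3)
    + (2*p^2/3) * Real.logb 2 (2*p^2/9)

noncomputable def G (p : ℝ) : ℝ :=
  H (1 - 2*p^2/3) + (2*p - 2*p^2) * Real.logb 2 ((2*p - 2*p^2)/3)
    + (2*p^2/3) * Real.logb 2 (2*p^2/9)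
    - (2*p - 4*p^2/3) * Real.logb 2 ((6*p - 4*p^2)/9)

lemma key_convex (a b : ℝ) (ha0 : 0 ≤ a) (ha1 : a < 1) (hb : 0 < b) (hab : a + b < 1) :
    (a+b) * Real.log (a+b) + (1-b) * Real.log (1-b) < a * Real.log a := by
  have h1a : (0:ℝ) < 1 - a := by linarith
  have hne : (1:ℝ) - a ≠ 0 := ne_of_gt h1a
  have hL : 0 < (1-a-b)/(1-a) := div_pos (by linarith) h1a
  have hM : 0 < b/(1-a) := div_pos hb h1a
  have hLM : (1-a-b)/(1-a) + b/(1-a) = 1 := by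
    rw [← add_div, div_eq_one_iff_eq hne]; ring
  have hML : b/(1-a) + (1-a-b)/(1-a) = 1 := by linarith
  have c1 := Real.strictConvexOn_mul_log.2 (Set.mem_Ici.mpr ha0)
    (Set.mem_Ici.mpr zero_le_one) (ne_of_lt ha1) hL hM hLM
  have c2 := Real.strictConvexOn_mul_log.2 (Set.mem_Ici.mpr ha0)
    (Set.mem_Ici.mpr zero_le_one) (ne_of_lt ha1) hM hL hML
  simp only [smul_eq_mul, mul_one, Real.log_one, mul_zero, add_zero] at c1 c2
  have e1 : (1-a-b)/(1-a) * a + b/(1-a) = a + b := by field_simp; ring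
  have e2 : b/(1-a) * a + (1-a-b)/(1-a) = 1 - b := by field_simp; ring
  rw [e1] at c1
  rw [e2] at c2
  have hsum : (1-a-b)/(1-a) * (a * Real.log a) + b/(1-a) * (a * Real.log a)
      = a * Real.log a := by
    rw [← add_mul, hLM, one_mul]
  linarith [add_lt_add c1 c2]

theorem stmt_18 (p : ℝ) (hp0 : 0 < p) (hp1 : p ≤ 1) :
    CEQdep p - CECdep p = G p ∧ 0 < G p := by
  constructor
  · simp only [CEQdep, CECdep, G]; ring
  · rcases eq_or_lt_of_le hp1 with hp | hp
    · -- p = 1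
      subst hp
      have l1 : Real.logb 2 ((1:ℝ)/3) < 0 := Real.logb_neg (by norm_num) (by norm_num) (by norm_num)
      have l2 : Real.logb 2 ((2:ℝ)/3) < 0 := Real.logb_neg (by norm_num) (by norm_num) (by norm_num)
      simp only [G, H]
      norm_num
      linarith
    · -- p < 1
      have q1 : (0:ℝ) < 2*p - 2*p^2 := by nlinarith
      have q2 : (0:ℝ) < 2*p^2/3 := by positivity
      have q3 : (0:ℝ) < 2*p - 4*p^2/3 := by nlinarith
      have q4 : 2*p - 2*p^2 + 2*p^2/3 < 1 := by nlinarith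
      have h2 : Real.log 2 ≠ 0 := ne_of_gt (Real.log_pos one_lt_two)
      have hG : G p = ((2*p - 2*p^2) * Real.log (2*p - 2*p^2)
          - (2*p - 4*p^2/3) * Real.log (2*p - 4*p^2/3)
          - (1 - 2*p^2/3) * Real.log (1 - 2*p^2/3)) / Real.log 2 := by
        simp only [G, H, Real.logb]
        rw [show (6*p - 4*p^2)/9 = (2*p - 4*p^2/3)/3 by ring,
            show 2*p^2/9 = (2*p^2/3)/3 by ring,
            show (1:ℝ) - (1 - 2*p^2/3) = 2*p^2/3 by ring,
            Real.log_div (ne_of_gt q1) (by norm_num),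
            Real.log_div (ne_of_gt q2) (by norm_num),
            Real.log_div (ne_of_gt q3) (by norm_num)]
        field_simp
        ring
      rw [hG]
      apply div_pos _ (Real.log_pos one_lt_two)
      have hk := key_convex (2*p - 2*p^2) (2*p^2/3) (le_of_lt q1) (by nlinarith) q2 q4
      rw [show 2*p - 2*p^2 + 2*p^2/3 = 2*p - 4*p^2/3 by ring] at hk
      linarith
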